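/- (Harmonic Ritz problem for the base shift σ = 0.) Let A ∈ ℂ^{n×n} be invertible, U ∈ ℂ^{n×k}, C = AU, and suppose W_{j+1} ∈ ℂ^{n×(j+1)s} and H̄_j ∈ ℂ^{(j+1)s×js} satisfy the block Arnoldi relation A W_j = W_{j+1} H̄_j, where W_j is the first js columns of W_{j+1}. Set V̂ = [U W_j], Ŵ = [C W_{j+1}], and let G be the block diagonal matrix with diagonal blocks I_k and H̄_j. Then for g ∈ ℂ^{k+js}, μ ∈ ℂ and y = A V̂ g, the harmonic Ritz condition that A⁻¹ y − μ y is orthogonal to every column of A V̂ holds if and only if G* Ŵ* V̂ g = μ G* Ŵ* Ŵ G g. -/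

import Mathlib

open Matrix

/-! The Arnoldi relation gives the factorisation `A V̂ = Ŵ G`, and invertibility of `A` turns
`A⁻¹ y` into `V̂ g`. The orthogonality conditions against the columns of `A V̂` are the
coordinates of `(A V̂)ᴴ (V̂ g - μ A V̂ g) = 0`, and substituting `(A V̂)ᴴ = Gᴴ Ŵᴴ` gives the
projected eigenproblem. -/

theorem Matrix.mul_fromCols_eq_fromCols_mul_fromBlocks {R m n p q r : Type*} [Semiring R]
    [Fintype n] [Fintype p] [Fintype r] [DecidableEq p]
    (A : Matrix m n R) (U : Matrix n p R) (W : Matrix n q R) (W₁ : Matrix m r R)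
    (H : Matrix r q R) (hA : A * W = W₁ * H) :
    A * fromCols U W = fromCols (A * U) W₁ * fromBlocks (1 : Matrix p p R) 0 0 H := by
  rw [fromCols_mul_fromBlocks, mul_fromCols]
  simp [hA]

theorem Matrix.forall_sum_star_mul_eq_zero_iff {R m n : Type*} [Semiring R] [StarRing R]
    [Fintype m] (M : Matrix m n R) (v : m → R) :
    (∀ c, ∑ p, star (M p c) * v p = 0) ↔ Mᴴ *ᵥ v = 0 := by
  simp only [funext_iff, mulVec, dotProduct, conjTranspose_apply, Pi.zero_apply]

theorem Matrix.harmonicRitz_iff {R m ι : Type*} [CommRing R] [StarRing R]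
    [Fintype m] [DecidableEq m] [Fintype ι]
    {A : Matrix m m R} (hA : IsUnit A) (V : Matrix m ι R) (g : ι → R) (μ : R) :
    (∀ c, ∑ p, star ((A * V) p c) * (A⁻¹ *ᵥ ((A * V) *ᵥ g) - μ • ((A * V) *ᵥ g)) p = 0) ↔
      (A * V)ᴴ *ᵥ (V *ᵥ g) = μ • (A * V)ᴴ *ᵥ ((A * V) *ᵥ g) := by
  have hinv : A⁻¹ *ᵥ ((A * V) *ᵥ g) = V *ᵥ g := by
    rw [mulVec_mulVec, ← Matrix.mul_assoc, nonsing_inv_mul A ((isUnit_iff_isUnit_det A).mp hA),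
      Matrix.one_mul]
  rw [forall_sum_star_mul_eq_zero_iff, hinv, mulVec_sub, mulVec_smul, sub_eq_zero]

/-- (Harmonic Ritz problem for the base shift `σ = 0`.)  With `A`
invertible, `C = AU`, a block Arnoldi relation `A W_j = W_{j+1} H̄_j`, `V̂ = [U W_j]`,
`Ŵ = [C W_{j+1}]`, `G = blkdiag(I_k, H̄_j)` and `y = A V̂ g`, the harmonic Ritz condition
`A⁻¹ y − μ y ⟂ A V̂ eₗ` for every column `eₗ` holds iff `G* Ŵ* V̂ g = μ G* Ŵ* Ŵ G g`. -/
theorem base_shift_harmonic_ritz {n s j k : ℕ}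
    (A : Matrix (Fin n) (Fin n) ℂ) (hinv : IsUnit A)
    (U C : Matrix (Fin n) (Fin k) ℂ) (hC : C = A * U)
    (W1 : Matrix (Fin n) (Fin ((j + 1) * s)) ℂ)
    (H : Matrix (Fin ((j + 1) * s)) (Fin (j * s)) ℂ)
    (hA : A * (W1.submatrix id (Fin.castLE (Nat.mul_le_mul (Nat.le_succ j) le_rfl)))
            = W1 * H)
    (Vhat : Matrix (Fin n) (Fin k ⊕ Fin (j * s)) ℂ)
    (hV : Vhat = Matrix.fromCols U
        (W1.submatrix id (Fin.castLE (Nat.mul_le_mul (Nat.le_succ j) le_rfl))))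
    (What : Matrix (Fin n) (Fin k ⊕ Fin ((j + 1) * s)) ℂ)
    (hW : What = Matrix.fromCols C W1)
    (G : Matrix (Fin k ⊕ Fin ((j + 1) * s)) (Fin k ⊕ Fin (j * s)) ℂ)
    (hG : G = Matrix.fromBlocks (1 : Matrix (Fin k) (Fin k) ℂ) 0 0 H)
    (g : Fin k ⊕ Fin (j * s) → ℂ) (μ : ℂ) (y : Fin n → ℂ)
    (hy : y = (A * Vhat).mulVec g) :
    (∀ c : Fin k ⊕ Fin (j * s),
        ∑ p, star ((A * Vhat) p c) * ((A⁻¹.mulVec y - μ • y) p) = 0) ↔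
    (Gᴴ * Whatᴴ * Vhat).mulVec g = μ • (Gᴴ * Whatᴴ * What * G).mulVec g := by
  have hfactor : A * Vhat = What * G := by
    rw [hV, hW, hG, hC]
    exact mul_fromCols_eq_fromCols_mul_fromBlocks A U _ W1 H hA
  rw [hy, harmonicRitz_iff hinv, hfactor, conjTranspose_mul, mulVec_mulVec, mulVec_mulVec,
    Matrix.mul_assoc (Gᴴ * Whatᴴ)]
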